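/- There exist universal constants C, c > 0 with the following property. Let n, N be positive integers, let M, r > 0, let ρ ∈ (0, min(1/2, c√n/(rM))], let θ₁, …, θ_N ∈ S^{n−1} be fixed, and let ξ ∈ S^{n−1}. Then for every t ∈ ℝ, F(ξ, t) ≤ 𝔼_η F(η^ξ, t) + C/M, where the expectation is taken over the random rounding η^ξ. -/

import Mathlib

open MeasureTheory Metric Set
open scoped RealInnerProductSpace

/-- `φ(r) = e^{−r²/2}`. -/
noncomputable def gphi (r : ℝ) : ℝ := Real.exp (-r ^ 2 / 2)

/-- `F(η,t) = (1/N) ∑_{k=1}^N φ(r⟨η,θ_k⟩ + t)`. -/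
noncomputable def Ffun {n N : ℕ} (r t : ℝ)
    (θ : Fin N → sphere (0 : EuclideanSpace ℝ (Fin n)) 1)
    (η : EuclideanSpace ℝ (Fin n)) : ℝ :=
  (1 / (N : ℝ)) * ∑ k : Fin N, gphi (r * ⟪η, (θ k : EuclideanSpace ℝ (Fin n))⟫ + t)

/-- The distribution of the random rounding of a real number `x` to the grid `sℤ`:
writing `x = s(k+p)` with `k = ⌊x/s⌋` and `p ∈ [0,1)`, it takes the value `sk` with
probability `1-p` and `s(k+1)` with probability `p`. -/
noncomputable def roundCoord (s x : ℝ) : Measure ℝ :=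
  ENNReal.ofReal (1 - Int.fract (x / s)) • Measure.dirac (s * ⌊x / s⌋) +
    ENNReal.ofReal (Int.fract (x / s)) • Measure.dirac (s * (⌊x / s⌋ + 1))

/-- The law of the random rounding `η^ξ` of `ξ ∈ ℝⁿ` to the lattice `(ρ/√n)ℤⁿ`,
with independent coordinates rounded as in `roundCoord`. -/
noncomputable def roundingLaw (n : ℕ) (ρ : ℝ) (ξ : EuclideanSpace ℝ (Fin n)) :
    Measure (EuclideanSpace ℝ (Fin n)) :=
  Measure.map (MeasurableEquiv.toLp 2 (Fin n → ℝ))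
    (Measure.pi fun i => roundCoord (ρ / Real.sqrt n) (ξ i))

/-!
Since `φ'' = (x² - 1) φ ≥ -1`, the function `x ↦ φ x + x² / 2` is convex, and Jensen's inequality
for it reads `φ (𝔼 X) ≤ 𝔼 φ(X) + Var X / 2` for every square-integrable `X`. Take
`X = r⟨η, θ_k⟩ + t` with `η` the random rounding of `ξ`: the rounding is unbiased, so
`𝔼 X = r⟨ξ, θ_k⟩ + t`, and its coordinates are independent with variance at most
`(ρ/√n)² / 4`, so `Var X ≤ r²ρ² / (4n)`. Averaging over `k` gives
`F(ξ, t) ≤ 𝔼 F(η^ξ, t) + r²ρ² / (8n)`, and the error is at most `1/M` when `ρ ≤ √n / (rM)` and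
`M ≥ 1`; for `M < 1` the claim is trivial because `0 ≤ F ≤ 1`.
-/

open ProbabilityTheory

lemma gphi_nonneg (x : ℝ) : 0 ≤ gphi x := (Real.exp_pos _).le

lemma gphi_le_one (x : ℝ) : gphi x ≤ 1 :=
  Real.exp_le_one_iff.2 (by nlinarith [sq_nonneg x])

lemma continuous_gphi : Continuous gphi := by unfold gphi; fun_prop

lemma hasDerivAt_gphi (x : ℝ) : HasDerivAt gphi (-x * gphi x) x := by
  have := ((hasDerivAt_pow 2 x).neg.div_const 2).exp
  convert this using 1
  · ext; simp [gphi]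
  · simp [gphi]; ring

lemma convexOn_gphi_add_sq_div_two : ConvexOn ℝ univ fun x => gphi x + x ^ 2 / 2 := by
  have hd (x : ℝ) : HasDerivAt (fun x => gphi x + x ^ 2 / 2) (-x * gphi x + x) x :=
    ((hasDerivAt_gphi x).add ((hasDerivAt_pow 2 x).div_const 2)).congr_deriv (by ring)
  have hd2 (x : ℝ) : HasDerivAt (fun x => -x * gphi x + x) ((x ^ 2 - 1) * gphi x + 1) x :=
    (((hasDerivAt_neg x).mul (hasDerivAt_gphi x)).add (hasDerivAt_id x)).congr_deriv (by ring)
  have hderiv : deriv (fun x => gphi x + x ^ 2 / 2) = fun x => -x * gphi x + x :=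
    funext fun x => (hd x).deriv
  refine convexOn_univ_of_deriv2_nonneg (fun x => (hd x).differentiableAt)
    (hderiv ▸ fun x => (hd2 x).differentiableAt) fun x => ?_
  rw [Function.iterate_succ_apply, Function.iterate_one, hderiv, (hd2 x).deriv]
  nlinarith [gphi_nonneg x, gphi_le_one x, mul_nonneg (sq_nonneg x) (gphi_nonneg x)]

lemma integrable_gphi_comp {Ω : Type*} [MeasurableSpace Ω] {μ : Measure Ω} [IsFiniteMeasure μ]
    {X : Ω → ℝ} (hX : AEStronglyMeasurable X μ) : Integrable (fun ω => gphi (X ω)) μ :=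
  .of_bound (continuous_gphi.comp_aestronglyMeasurable hX) 1 (.of_forall fun ω => by
    rw [Real.norm_of_nonneg (gphi_nonneg _)]; exact gphi_le_one _)

lemma gphi_integral_le_integral_add_variance {Ω : Type*} [MeasurableSpace Ω] {μ : Measure Ω}
    [IsProbabilityMeasure μ] {X : Ω → ℝ} (hX : MemLp X 2 μ) :
    gphi μ[X] ≤ ∫ ω, gphi (X ω) ∂μ + Var[X; μ] / 2 := by
  have hgphi := integrable_gphi_comp hX.1
  have hsq : Integrable (fun ω => X ω ^ 2 / 2) μ := hX.integrable_sq.div_const 2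
  have jensen := convexOn_gphi_add_sq_div_two.map_integral_le
    (continuous_gphi.add (by fun_prop)).continuousOn isClosed_univ
    (.of_forall fun _ => mem_univ _) (hX.integrable one_le_two) (hgphi.add hsq)
  rw [integral_add hgphi hsq, integral_div] at jensen
  rw [variance_eq_sub hX]
  simp only [Pi.pow_apply]
  linarith

section roundCoord

variable {s x : ℝ}

instance : IsProbabilityMeasure (roundCoord s x) := by
  constructor
  simp [roundCoord, Measure.add_apply, ← ENNReal.ofReal_add, (Int.fract_lt_one _).le,
    Int.fract_nonneg]

lemma integrable_roundCoord (f : ℝ → ℝ) : Integrable f (roundCoord s x) :=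
  ((integrable_dirac enorm_lt_top).smul_measure ENNReal.ofReal_ne_top).add_measure
    ((integrable_dirac enorm_lt_top).smul_measure ENNReal.ofReal_ne_top)

lemma integral_roundCoord (f : ℝ → ℝ) :
    ∫ y, f y ∂roundCoord s x = (1 - Int.fract (x / s)) * f (s * ⌊x / s⌋)
      + Int.fract (x / s) * f (s * (⌊x / s⌋ + 1)) := by
  rw [roundCoord, integral_add_measure, integral_smul_measure, integral_smul_measure,
    integral_dirac, integral_dirac, ENNReal.toReal_ofReal, ENNReal.toReal_ofReal]
  · rfl
  all_goals first
    | linarith [Int.fract_lt_one (x / s), Int.fract_nonneg (x / s)]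
    | exact (integrable_dirac enorm_lt_top).smul_measure ENNReal.ofReal_ne_top

lemma mul_div_eq_floor_add_fract : s * (x / s) = s * (⌊x / s⌋ + Int.fract (x / s)) := by
  rw [Int.floor_add_fract]

-- The mean is `x` when `s ≠ 0`; for `s = 0` the rounding is `dirac 0`.
lemma integral_id_roundCoord : ∫ y, y ∂roundCoord s x = s * (x / s) := by
  rw [integral_roundCoord, mul_div_eq_floor_add_fract]
  ring

lemma variance_id_roundCoord_le : Var[id; roundCoord s x] ≤ s ^ 2 / 4 := by
  rw [variance_eq_integral measurable_id.aemeasurable, integral_roundCoord]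
  simp only [id, integral_id_roundCoord, mul_div_eq_floor_add_fract]
  set p := Int.fract (x / s)
  calc (1 - p) * (s * ⌊x / s⌋ - s * (⌊x / s⌋ + p)) ^ 2
        + p * (s * (⌊x / s⌋ + 1) - s * (⌊x / s⌋ + p)) ^ 2
      = s ^ 2 / 4 - (s * (1 - 2 * p)) ^ 2 / 4 := by ring
    _ ≤ s ^ 2 / 4 := by linarith [sq_nonneg (s * (1 - 2 * p))]

lemma memLp_id_roundCoord : MemLp id 2 (roundCoord s x) :=
  (memLp_two_iff_integrable_sq aestronglyMeasurable_id).2 (integrable_roundCoord _)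

end roundCoord

section roundingLaw

variable {n : ℕ} {ρ : ℝ} (ξ θ : EuclideanSpace ℝ (Fin n))

instance : IsProbabilityMeasure (roundingLaw n ρ ξ) :=
  Measure.isProbabilityMeasure_map (MeasurableEquiv.toLp 2 _).measurable.aemeasurable

lemma inner_toLp_eq_sum (x : Fin n → ℝ) :
    ⟪MeasurableEquiv.toLp 2 (Fin n → ℝ) x, θ⟫ = ∑ i, θ i * x i := by
  simp [PiLp.inner_apply]

lemma memLp_inner_roundingLaw : MemLp (fun η => ⟪η, θ⟫) 2 (roundingLaw n ρ ξ) := by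
  rw [roundingLaw, memLp_map_measure_iff (by fun_prop) (by fun_prop)]
  simp only [Function.comp_def, inner_toLp_eq_sum]
  exact memLp_finsetSum _ fun i _ =>
    (memLp_id_roundCoord.comp_measurePreserving (measurePreserving_eval _ i)).const_mul _

lemma integral_inner_roundingLaw (hρ : ρ ≠ 0) :
    ∫ η, ⟪η, θ⟫ ∂roundingLaw n ρ ξ = ⟪ξ, θ⟫ := by
  rw [roundingLaw, integral_map_equiv]
  simp only [inner_toLp_eq_sum]
  rw [integral_finsetSum]
  · have hs (i : Fin n) : ρ / √n ≠ 0 :=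
      div_ne_zero hρ (Real.sqrt_ne_zero'.2 (Nat.cast_pos.2 i.pos))
    simp only [integral_const_mul, integral_eval, integral_id_roundCoord]
    rw [show ⟪ξ, θ⟫ = ∑ i, θ i * ξ i by simp [PiLp.inner_apply]]
    exact Finset.sum_congr rfl fun i _ => by rw [mul_div_cancel₀ _ (hs i)]
  · exact fun i _ => ((memLp_id_roundCoord.comp_measurePreserving
      (measurePreserving_eval _ i)).integrable one_le_two).const_mul _

lemma variance_inner_roundingLaw_le :
    Var[fun η => ⟪η, θ⟫; roundingLaw n ρ ξ] ≤ ρ ^ 2 / (4 * n) * ‖θ‖ ^ 2 := by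
  rw [roundingLaw, variance_map_equiv]
  simp only [Function.comp_def, inner_toLp_eq_sum, ← Finset.sum_fn]
  rw [variance_sum_pi]
  · calc ∑ i, Var[fun y => θ i * y; roundCoord (ρ / √n) (ξ i)]
        ≤ ∑ i, θ i ^ 2 * ((ρ / √n) ^ 2 / 4) := by
          gcongr with i
          rw [variance_const_mul]
          exact mul_le_mul_of_nonneg_left variance_id_roundCoord_le (sq_nonneg _)
      _ = ρ ^ 2 / (4 * n) * ‖θ‖ ^ 2 := by
          rw [← Finset.sum_mul, EuclideanSpace.real_norm_sq_eq, div_pow,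
            Real.sq_sqrt n.cast_nonneg]
          ring
  · exact fun i => memLp_id_roundCoord.const_mul _

end roundingLaw

section Ffun

variable {n N : ℕ} {ρ : ℝ} (r t : ℝ)

lemma gphi_le_integral_roundingLaw_add (hρ : ρ ≠ 0) (ξ θ : EuclideanSpace ℝ (Fin n)) :
    gphi (r * ⟪ξ, θ⟫ + t) ≤ ∫ η, gphi (r * ⟪η, θ⟫ + t) ∂roundingLaw n ρ ξ
      + r ^ 2 * ρ ^ 2 / (8 * n) * ‖θ‖ ^ 2 := by
  have hinner := memLp_inner_roundingLaw (ρ := ρ) ξ θ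
  have hX : MemLp (fun η => r * ⟪η, θ⟫ + t) 2 (roundingLaw n ρ ξ) :=
    (hinner.const_mul r).add (memLp_const t)
  have hmean : ∫ η, r * ⟪η, θ⟫ + t ∂roundingLaw n ρ ξ = r * ⟪ξ, θ⟫ + t := by
    rw [integral_add ((hinner.integrable one_le_two).const_mul r) (integrable_const t),
      integral_const_mul, integral_inner_roundingLaw ξ θ hρ]
    simp
  have hvar : Var[fun η => r * ⟪η, θ⟫ + t; roundingLaw n ρ ξ]
      ≤ r ^ 2 * (ρ ^ 2 / (4 * n) * ‖θ‖ ^ 2) := by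
    rw [variance_add_const (hinner.const_mul r).1, variance_const_mul]
    exact mul_le_mul_of_nonneg_left (variance_inner_roundingLaw_le ξ θ) (sq_nonneg r)
  calc gphi (r * ⟪ξ, θ⟫ + t)
      ≤ ∫ η, gphi (r * ⟪η, θ⟫ + t) ∂roundingLaw n ρ ξ
        + Var[fun η => r * ⟪η, θ⟫ + t; roundingLaw n ρ ξ] / 2 :=
        hmean ▸ gphi_integral_le_integral_add_variance hX
    _ ≤ ∫ η, gphi (r * ⟪η, θ⟫ + t) ∂roundingLaw n ρ ξ
        + r ^ 2 * (ρ ^ 2 / (4 * n) * ‖θ‖ ^ 2) / 2 := by gcongr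
    _ = _ := by ring

lemma one_div_natCast_mul_self_le_one (N : ℕ) : 1 / (N : ℝ) * N ≤ 1 := by
  rw [one_div_mul_eq_div]
  exact div_self_le_one _

variable (θ : Fin N → sphere (0 : EuclideanSpace ℝ (Fin n)) 1)

lemma Ffun_nonneg (η : EuclideanSpace ℝ (Fin n)) : 0 ≤ Ffun r t θ η :=
  mul_nonneg (by positivity) (Finset.sum_nonneg fun _ _ => gphi_nonneg _)

lemma Ffun_le_one (η : EuclideanSpace ℝ (Fin n)) : Ffun r t θ η ≤ 1 :=
  calc Ffun r t θ η ≤ 1 / (N : ℝ) * ∑ _k : Fin N, 1 := by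
        unfold Ffun; gcongr; exact gphi_le_one _
    _ ≤ 1 := by simpa using one_div_natCast_mul_self_le_one N

lemma Ffun_le_integral_roundingLaw_add (hρ : ρ ≠ 0) (ξ : EuclideanSpace ℝ (Fin n)) :
    Ffun r t θ ξ ≤ ∫ η, Ffun r t θ η ∂roundingLaw n ρ ξ + r ^ 2 * ρ ^ 2 / (8 * n) := by
  have hθ (k : Fin N) : ‖(θ k : EuclideanSpace ℝ (Fin n))‖ = 1 := norm_eq_of_mem_sphere (θ k)
  set E := r ^ 2 * ρ ^ 2 / (8 * n)
  simp only [Ffun]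
  rw [integral_const_mul, integral_finsetSum _ fun k _ => integrable_gphi_comp (by fun_prop)]
  calc 1 / (N : ℝ) * ∑ k, gphi (r * ⟪ξ, (θ k : EuclideanSpace ℝ (Fin n))⟫ + t)
      ≤ 1 / (N : ℝ) * ∑ k, (∫ η, gphi (r * ⟪η, (θ k : EuclideanSpace ℝ (Fin n))⟫ + t)
          ∂roundingLaw n ρ ξ + E) := by
        gcongr with k
        simpa [hθ k] using gphi_le_integral_roundingLaw_add r t hρ ξ (θ k)
    _ = 1 / (N : ℝ) * ∑ k, ∫ η, gphi (r * ⟪η, (θ k : EuclideanSpace ℝ (Fin n))⟫ + t)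
          ∂roundingLaw n ρ ξ + 1 / (N : ℝ) * N * E := by
        rw [Finset.sum_add_distrib, Finset.sum_const, Finset.card_univ, Fintype.card_fin,
          nsmul_eq_mul]
        ring
    _ ≤ _ := by
        gcongr
        exact mul_le_of_le_one_left (by positivity) (one_div_natCast_mul_self_le_one N)

end Ffun

lemma sq_mul_sq_div_le_one_div {n : ℕ} (hn : 0 < n) {M r ρ : ℝ} (hM : 1 ≤ M) (hr : 0 < r)
    (hρ : 0 ≤ ρ) (hρM : ρ ≤ √n / (r * M)) : r ^ 2 * ρ ^ 2 / (8 * n) ≤ 1 / M := by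
  have hn' : (0 : ℝ) < n := Nat.cast_pos.2 hn
  have hrρ : r * ρ ≤ √n / M := by
    rw [le_div_iff₀ (by positivity)] at hρM ⊢
    linarith
  have hsq : (r * ρ) ^ 2 ≤ n / M ^ 2 := by
    calc (r * ρ) ^ 2 ≤ (√n / M) ^ 2 := by gcongr
      _ = n / M ^ 2 := by rw [div_pow, Real.sq_sqrt hn'.le]
  calc r ^ 2 * ρ ^ 2 / (8 * n) ≤ n / M ^ 2 / (8 * n) := by rw [← mul_pow]; gcongr
    _ = 1 / (8 * M ^ 2) := by field_simp
    _ ≤ 1 / M := by gcongr; nlinarith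

/-- for `ρ ≤ min(1/2, c√n/(rM))`, any fixed points `θ₁,…,θ_N` on the
sphere, and any unit vector `ξ`: `F(ξ,t) ≤ 𝔼_η F(η^ξ,t) + C/M`. -/
theorem Ffun_le_expectation_rounding :
    ∃ C c : ℝ, 0 < C ∧ 0 < c ∧
      ∀ n N : ℕ, 0 < n → 0 < N → ∀ M r : ℝ, 0 < M → 0 < r →
        ∀ ρ : ℝ, 0 < ρ → ρ ≤ min (1 / 2) (c * Real.sqrt n / (r * M)) →
          ∀ θ : Fin N → sphere (0 : EuclideanSpace ℝ (Fin n)) 1,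
            ∀ ξ : EuclideanSpace ℝ (Fin n), ‖ξ‖ = 1 → ∀ t : ℝ,
              Ffun r t θ ξ ≤ (∫ η, Ffun r t θ η ∂(roundingLaw n ρ ξ)) + C / M := by
  refine ⟨1, 1, one_pos, one_pos, fun n N hn _ M r hM hr ρ hρ hρle θ ξ _ t => ?_⟩
  have hint : 0 ≤ ∫ η, Ffun r t θ η ∂roundingLaw n ρ ξ := integral_nonneg (Ffun_nonneg r t θ)
  rcases le_or_gt M 1 with hM1 | hM1
  · have : 1 ≤ 1 / M := by rw [le_div_iff₀ hM]; linarith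
    linarith [Ffun_le_one r t θ ξ]
  · have hρM : ρ ≤ √n / (r * M) := by simpa using hρle.trans (min_le_right _ _)
    have := sq_mul_sq_div_le_one_div hn hM1.le hr hρ.le hρM
    linarith [Ffun_le_integral_roundingLaw_add r t θ hρ.ne' ξ]
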